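/- arXiv:2007.10538 — 2 statements merged into one kernel-verified Lean document; each statement's English description precedes it below -/
import Mathlib

section
/- Let ã ~ N(a, λΣ) be a Gaussian vector in ℝ^A, let w₁,…,w_C ∈ ℝ^A, b₁,…,b_C ∈ ℝ, and fix a class index y ∈ {1,…,C}. Then E_ã[−log(exp(w_yᵀã + b_y) / Σ_{j=1}^C exp(w_jᵀã + b_j))] ≤ −log(exp(w_yᵀa + b_y) / Σ_{j=1}^C exp(w_jᵀa + b_j + (λ/2)(w_j − w_y)ᵀΣ(w_j − w_y))). -/
/-!
Subtracting the logit of the true class, the loss is `log g` with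
`g = ∑ⱼ exp ((w j - w y) ⬝ᵥ ã + (b j - b y)) ≥ 1`. Jensen's inequality for the concave `log`
gives `E[log g] ≤ log E[g]`, and `E[g]` is computed term by term from the Gaussian
moment-generating function `E[exp ξ] = exp (μ + σ² / 2)` of `ξ = (w j - w y) ⬝ᵥ ã`.
-/

open MeasureTheory ProbabilityTheory Real Matrix
open scoped NNReal

/-- A random vector `X : Ω → (Fin A → ℝ)` is multivariate Gaussian with mean `m` and
covariance matrix `S` iff every linear functional of it is a one-dimensional Gaussian
with the corresponding mean and variance (Cramér–Wold characterization). -/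
def IsMvGaussian {Ω : Type*} [MeasurableSpace Ω] {A : ℕ} (P : Measure Ω)
    (X : Ω → Fin A → ℝ) (m : Fin A → ℝ) (S : Matrix (Fin A) (Fin A) ℝ) : Prop :=
  ∀ v : Fin A → ℝ,
    P.map (fun ω => v ⬝ᵥ X ω) = gaussianReal (v ⬝ᵥ m) (Real.toNNReal (v ⬝ᵥ S.mulVec v))

lemma neg_log_exp_div_sum_exp {ι : Type*} (s : Finset ι) (r : ℝ) (t : ι → ℝ) :
    -log (exp r / ∑ j ∈ s, exp (t j)) = log (∑ j ∈ s, exp (t j - r)) := by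
  simp only [← log_inv, inv_div, Finset.sum_div, exp_sub]

lemma integral_log_le_log_integral_of_one_le {α : Type*} [MeasurableSpace α] {μ : Measure α}
    [IsProbabilityMeasure μ] {f : α → ℝ} (hf : Integrable f μ) (hf_one : ∀ᵐ x ∂μ, 1 ≤ f x) :
    ∫ x, log (f x) ∂μ ≤ log (∫ x, f x ∂μ) := by
  set m := ∫ x, f x ∂μ
  have hm : 0 < m := zero_lt_one.trans_le <| by
    simpa using integral_mono_ae (integrable_const 1) hf hf_one
  -- the tangent line of `log` at `m`
  have htangent : ∀ᵐ x ∂μ, log (f x) ≤ f x / m + (log m - 1) := by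
    filter_upwards [hf_one] with x hx
    have := log_le_sub_one_of_pos (div_pos (by linarith) hm : 0 < f x / m)
    rw [log_div (by linarith) hm.ne'] at this
    linarith
  have hlog_int : Integrable (fun x => log (f x)) μ := by
    refine hf.mono' (measurable_log.comp_aemeasurable hf.aemeasurable).aestronglyMeasurable ?_
    filter_upwards [hf_one] with x hx
    rw [norm_of_nonneg (log_nonneg hx)]
    exact (log_le_sub_one_of_pos (by linarith)).trans (sub_le_self _ zero_le_one)
  calc ∫ x, log (f x) ∂μ ≤ ∫ x, (f x / m + (log m - 1)) ∂μ :=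
        integral_mono_ae hlog_int ((hf.div_const m).add (integrable_const _)) htangent
    _ = log m := by
        rw [integral_add (hf.div_const m) (integrable_const _), integral_div, integral_const,
          probReal_univ, div_self hm.ne']
        simp

section IsMvGaussian

variable {Ω : Type*} [MeasurableSpace Ω] {A : ℕ} {P : Measure Ω} {X : Ω → Fin A → ℝ}
  {m : Fin A → ℝ} {S : Matrix (Fin A) (Fin A) ℝ}

lemma IsMvGaussian.mgf_dotProduct (hX : IsMvGaussian P X m S) (hS : S.PosSemidef)
    (v : Fin A → ℝ) (t : ℝ) :
    mgf (fun ω => v ⬝ᵥ X ω) P t = exp ((v ⬝ᵥ m) * t + (v ⬝ᵥ S *ᵥ v) * t ^ 2 / 2) := by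
  rw [mgf_gaussianReal (hX v), coe_toNNReal _ (by simpa using hS.dotProduct_mulVec_nonneg v)]

lemma IsMvGaussian.integrable_exp_dotProduct_add [NeZero P] (hX : IsMvGaussian P X m S)
    (hS : S.PosSemidef) (v : Fin A → ℝ) (c : ℝ) : Integrable (fun ω => exp (v ⬝ᵥ X ω + c)) P := by
  have h : Integrable (fun ω => exp (1 * (v ⬝ᵥ X ω))) P := by
    rw [← mgf_pos_iff, hX.mgf_dotProduct hS]
    exact exp_pos _
  simpa only [one_mul, exp_add] using h.mul_const (exp c)

lemma IsMvGaussian.integral_exp_dotProduct_add (hX : IsMvGaussian P X m S) (hS : S.PosSemidef)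
    (v : Fin A → ℝ) (c : ℝ) :
    ∫ ω, exp (v ⬝ᵥ X ω + c) ∂P = exp (v ⬝ᵥ m + c + (v ⬝ᵥ S *ᵥ v) / 2) := by
  have h := hX.mgf_dotProduct hS v 1
  simp only [mgf, one_mul, one_pow, mul_one] at h
  simp only [exp_add, integral_mul_const, h]
  ring

end IsMvGaussian

/-- **Proposition 1 of the paper.** For `ã ~ N(a, λΣ)` and a softmax
classifier with weights `w_j` and biases `b_j`, the expected cross-entropy loss for the
true class `y` is upper bounded by the ISDA surrogate loss. -/
theorem isda_upper_bound {Ω : Type*} [MeasurableSpace Ω] {A C : ℕ}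
    (P : Measure Ω) [IsProbabilityMeasure P] (X : Ω → Fin A → ℝ) (a : Fin A → ℝ)
    (Sig : Matrix (Fin A) (Fin A) ℝ) (lam : ℝ) (hlam : 0 ≤ lam) (hSig : Sig.PosSemidef)
    (hX : IsMvGaussian P X a (lam • Sig))
    (w : Fin C → Fin A → ℝ) (b : Fin C → ℝ) (y : Fin C) :
    ∫ ω, -Real.log (Real.exp (w y ⬝ᵥ X ω + b y) / ∑ j, Real.exp (w j ⬝ᵥ X ω + b j)) ∂P ≤
      -Real.log (Real.exp (w y ⬝ᵥ a + b y) /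
        ∑ j, Real.exp (w j ⬝ᵥ a + b j +
          lam / 2 * ((w j - w y) ⬝ᵥ Sig.mulVec (w j - w y)))) := by
  have hS : (lam • Sig).PosSemidef := hSig.smul hlam
  set g : Ω → ℝ := fun ω => ∑ j, exp ((w j - w y) ⬝ᵥ X ω + (b j - b y))
  have hg_int : Integrable g P :=
    integrable_finsetSum _ fun j _ => hX.integrable_exp_dotProduct_add hS _ _
  have hg_one : ∀ ω, 1 ≤ g ω := fun ω => by
    calc (1 : ℝ) = exp ((w y - w y) ⬝ᵥ X ω + (b y - b y)) := by simp
      _ ≤ g ω := Finset.single_le_sum (f := fun j => exp ((w j - w y) ⬝ᵥ X ω + (b j - b y)))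
          (fun j _ => (exp_pos _).le) (Finset.mem_univ y)
  calc _ = ∫ ω, log (g ω) ∂P := by
        refine integral_congr_ae (ae_of_all _ fun ω => ?_)
        dsimp only
        rw [neg_log_exp_div_sum_exp]
        refine congrArg log (Finset.sum_congr rfl fun j _ => congrArg exp ?_)
        rw [sub_dotProduct]
        ring
    _ ≤ log (∫ ω, g ω ∂P) := integral_log_le_log_integral_of_one_le hg_int (ae_of_all _ hg_one)
    _ = _ := by
        rw [integral_finsetSum _ fun j _ => hX.integrable_exp_dotProduct_add hS _ _,
          neg_log_exp_div_sum_exp]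
        refine congrArg log (Finset.sum_congr rfl fun j _ => ?_)
        rw [hX.integral_exp_dotProduct_add hS, smul_mulVec, dotProduct_smul, smul_eq_mul,
          sub_dotProduct]
        congr 1
        ring
end

section
/- Let X be a Gaussian random variable with mean μ and variance σ² > 0. Then E[log(1 + e^X)] ≤ log(1 + e^{μ + σ²/2}). -/
open MeasureTheory ProbabilityTheory Real
open scoped NNReal

/-! Jensen's inequality for the concave function `log` on `[1, ∞)`, applied to `1 + e^X`, gives
`E[log (1 + e^X)] ≤ log (1 + E[e^X])`, and `E[e^X]` is the Gaussian moment-generating function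
at `1`, namely `e^{μ + σ²/2}`. -/

lemma integral_log_one_add_le_log_one_add_integral {Ω : Type*} [MeasurableSpace Ω]
    {P : Measure Ω} [IsProbabilityMeasure P] {Z : Ω → ℝ} (hZ : ∀ᵐ ω ∂P, 0 ≤ Z ω)
    (hZi : Integrable Z P) :
    ∫ ω, log (1 + Z ω) ∂P ≤ log (1 + ∫ ω, Z ω ∂P) := by
  have hconc : ConcaveOn ℝ (Set.Ici 1) log :=
    strictConcaveOn_log_Ioi.concaveOn.subset
      (fun _ hx ↦ Set.mem_Ioi.2 (lt_of_lt_of_le one_pos hx)) (convex_Ici 1)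
  have hcont : ContinuousOn log (Set.Ici 1) :=
    continuousOn_log.mono fun _ hx ↦ (lt_of_lt_of_le one_pos hx).ne'
  have hmem : ∀ᵐ ω ∂P, 1 + Z ω ∈ Set.Ici 1 := by
    filter_upwards [hZ] with ω hω using le_add_of_nonneg_right hω
  -- `0 ≤ log (1 + z) ≤ z` for `z ≥ 0`
  have hlog_int : Integrable (fun ω ↦ log (1 + Z ω)) P := by
    refine hZi.mono' ?_ ?_
    · exact (measurable_log.comp (measurable_const.add measurable_id)).comp_aemeasurable
        hZi.aemeasurable |>.aestronglyMeasurable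
    · filter_upwards [hZ] with ω hω
      rw [norm_of_nonneg (log_nonneg (by linarith))]
      linarith [log_le_sub_one_of_pos (by linarith : (0 : ℝ) < 1 + Z ω)]
  calc ∫ ω, log (1 + Z ω) ∂P
      ≤ log (∫ ω, (1 + Z ω) ∂P) :=
        hconc.le_map_integral hcont isClosed_Ici hmem
          ((integrable_const 1).add hZi) hlog_int
    _ = log (1 + ∫ ω, Z ω ∂P) := by
        rw [integral_add (integrable_const 1) hZi, integral_const, probReal_univ, one_smul]

theorem expected_softplus_gaussian_upper_bound_general {Ω : Type*} [MeasurableSpace Ω]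
    (P : Measure Ω) [IsProbabilityMeasure P] (X : Ω → ℝ) (μ : ℝ) (σ2 : ℝ≥0)
    (hX : P.map X = gaussianReal μ σ2) :
    ∫ ω, Real.log (1 + Real.exp (X ω)) ∂P ≤ Real.log (1 + Real.exp (μ + (σ2 : ℝ) / 2)) := by
  have hmgf : mgf X P 1 = rexp (μ + σ2 / 2) := by
    rw [mgf_gaussianReal hX]
    ring_nf
  have hexp_int : Integrable (fun ω ↦ rexp (1 * X ω)) P :=
    mgf_pos_iff.mp (hmgf ▸ exp_pos _)
  simp only [one_mul] at hexp_int
  calc ∫ ω, log (1 + rexp (X ω)) ∂P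
      ≤ log (1 + ∫ ω, rexp (X ω) ∂P) :=
        integral_log_one_add_le_log_one_add_integral
          (Filter.Eventually.of_forall fun ω ↦ (exp_pos (X ω)).le) hexp_int
    _ = log (1 + rexp (μ + σ2 / 2)) := by
        rw [← hmgf, mgf]
        simp only [one_mul]

/-- **binary special case of the ISDA bound.** If `X ~ N(μ, σ²)` with
`σ² > 0`, then `E[log(1 + e^X)] ≤ log(1 + e^{μ + σ²/2})`. -/
theorem expected_softplus_gaussian_upper_bound {Ω : Type*} [MeasurableSpace Ω]
    (P : Measure Ω) [IsProbabilityMeasure P] (X : Ω → ℝ) (μ : ℝ) (σ2 : ℝ≥0) (hσ : 0 < σ2)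
    (hX : P.map X = gaussianReal μ σ2) :
    ∫ ω, Real.log (1 + Real.exp (X ω)) ∂P ≤ Real.log (1 + Real.exp (μ + (σ2 : ℝ) / 2)) :=
  expected_softplus_gaussian_upper_bound_general P X μ σ2 hX
end
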